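/- (Theorem 4.2, Decomposition Formula, finite field case) Let F be a finite field with q elements. For each X ∈ L(A^ρ), let χ(X, t) denote χ(A_g, t) for any g ∈ M(A^ρ/X) (this polynomial is the same for every such g), and let A^ρ/X denote the arrangement {H_I ∩ X : I ∈ C(M), X ⊄ H_I} of hyperplanes of X, with characteristic polynomial χ(A^ρ/X, t) computed in the ambient space X. Then Σ_{X ∈ L(A^ρ)} χ(X, q) · χ(A^ρ/X, q) = q^n (q − 1)^m. -/

import Mathlib

open Matrix

variable {F : Type*} [Field F] {m n : ℕ}

/-- The subsystem `[A|J] x = [g|J]` is consistent. -/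
def Consistent (A : Matrix (Fin m) (Fin n) F) (J : Finset (Fin m)) (g : Fin m → F) : Prop :=
  ∃ x : Fin n → F, ∀ j ∈ J, A j ⬝ᵥ x = g j

/-- `I` is a circuit of the matroid represented by the rows of `A`: the rows indexed by `I`
are linearly dependent, but the rows indexed by any proper subset are linearly independent. -/
def IsCircuit (A : Matrix (Fin m) (Fin n) F) (I : Finset (Fin m)) : Prop :=
  ¬ LinearIndependent F (fun i : ↥I => A (i : Fin m)) ∧
    ∀ J : Finset (Fin m), J ⊂ I → LinearIndependent F (fun j : ↥J => A (j : Fin m))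

/-- `c` is a circuit vector of the circuit `I`: `c · A = 0`, the entries of `c` indexed by `I`
are nonzero, and all other entries vanish. -/
def IsCircuitVector (A : Matrix (Fin m) (Fin n) F) (I : Finset (Fin m)) (c : Fin m → F) : Prop :=
  Matrix.vecMul c A = 0 ∧ (∀ i ∈ I, c i ≠ 0) ∧ (∀ i ∉ I, c i = 0)

/-- The intersection poset of the arrangement `{H i}` of hyperplanes of the ambient space
`V`: `V` together with all nonempty intersections of subfamilies, i.e. the collection of
nonempty sets of the form `V ∩ ⋂ i ∈ S, H i` (the empty subfamily `S = ∅` yields `V`);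
it is ordered by reverse inclusion. -/
def flats {E ι : Type*} (V : Set E) (H : ι → Set E) : Set (Set E) :=
  {W | (∃ S : Set ι, W = V ∩ ⋂ i ∈ S, H i) ∧ W.Nonempty}

lemma flats_finite {E ι : Type*} [Finite ι] (V : Set E) (H : ι → Set E) :
    (flats V H).Finite := by
  have hsub : flats V H ⊆ (fun S : Set ι => V ∩ ⋂ i ∈ S, H i) '' Set.univ := by
    rintro W ⟨⟨S, rfl⟩, -⟩
    exact ⟨S, Set.mem_univ _, rfl⟩
  exact (Set.finite_univ.image _).subset hsub

lemma self_mem_flats {E ι : Type*} {V : Set E} (H : ι → Set E) (hV : V.Nonempty) :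
    V ∈ flats V H :=
  ⟨⟨∅, by simp⟩, hV⟩

/-- The dimension of a subset of an `F`-vector space: the dimension of the direction of its
affine span. -/
noncomputable def adim (F : Type*) [Field F] {E : Type*} [AddCommGroup E] [Module F E]
    (W : Set E) : ℕ :=
  Module.finrank F (affineSpan F W).direction

open Classical in
/-- The characteristic polynomial `χ(B, t) = ∑_{W ∈ L(B)} μ(V, W) t^(dim W)` of the
arrangement `B = {H i}` of hyperplanes of the ambient space `V`, where `μ` is the Möbius
function of the intersection poset `L(B)` ordered by reverse inclusion (so the Möbius value
`μ(V, W)` of the reverse-inclusion poset is `IncidenceAlgebra.mu` from `W` to `V` in the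
inclusion order). -/
noncomputable def chi (F : Type*) [Field F] {E ι : Type*} [AddCommGroup E] [Module F E]
    [Finite ι] (V : Set E) (H : ι → Set E) : Polynomial ℤ :=
  letI : Fintype ↥(flats V H) := (flats_finite V H).fintype
  letI : LocallyFiniteOrder ↥(flats V H) := Fintype.toLocallyFiniteOrder
  if hV : V.Nonempty then
    ∑ W : ↥(flats V H),
      Polynomial.C (IncidenceAlgebra.mu ℤ W (⟨V, self_mem_flats H hV⟩ : ↥(flats V H))) *
        Polynomial.X ^ adim F (W : Set E)
  else 0

/-- The hyperplane `H_I ⊆ F^m` associated with a circuit `I`: the zero set of any circuit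
vector of `I` (independent of the choice of circuit vector). -/
def Hcirc (A : Matrix (Fin m) (Fin n) F) (I : Finset (Fin m)) : Set (Fin m → F) :=
  {y | ∀ c : Fin m → F, IsCircuitVector A I c → c ⬝ᵥ y = 0}

/-- `M(A^ρ/X)`: the complement, inside `X`, of the hyperplanes of `A^ρ` not containing
`X`. -/
def Mres (A : Matrix (Fin m) (Fin n) F) (X : Set (Fin m → F)) : Set (Fin m → F) :=
  X \ ⋃ I ∈ {I : Finset (Fin m) | IsCircuit A I ∧ ¬ X ⊆ Hcirc A I}, Hcirc A I

/-- The affine hyperplane `H_{ρ_i, g_i} = {x ∈ F^n : ρ_i · x = g_i}` of the arrangement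
`A_g`. -/
def Haff (A : Matrix (Fin m) (Fin n) F) (g : Fin m → F) (i : Fin m) : Set (Fin n → F) :=
  {x | A i ⬝ᵥ x = g i}

section Aux

/-- A set closed under affine combinations `c • (p₁ - p₂) + p₃`. -/
def AffClosed (F : Type*) [Field F] {E : Type*} [AddCommGroup E] [Module F E]
    (W : Set E) : Prop :=
  ∀ (c : F) ⦃p₁ p₂ p₃ : E⦄, p₁ ∈ W → p₂ ∈ W → p₃ ∈ W → c • (p₁ - p₂) + p₃ ∈ W

variable {E ι : Type*}

/-- The complement, inside `W`, of the hyperplanes not containing `W`. -/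
def mresA (H : ι → Set E) (W : Set E) : Set E :=
  W \ ⋃ i ∈ {i | ¬ W ⊆ H i}, H i

/-- The smallest flat containing a point `x ∈ V`. -/
def flatOf (V : Set E) (H : ι → Set E) (x : E) : Set E :=
  V ∩ ⋂ i ∈ {i | x ∈ H i}, H i

lemma flats_subset {V : Set E} {H : ι → Set E} {W : Set E} (hW : W ∈ flats V H) : W ⊆ V := by
  obtain ⟨⟨S, rfl⟩, -⟩ := hW; exact Set.inter_subset_left

lemma mem_flatOf {V : Set E} {H : ι → Set E} {x : E} (hx : x ∈ V) : x ∈ flatOf V H x :=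
  ⟨hx, Set.mem_iInter₂.2 fun _ hi => hi⟩

lemma flatOf_mem_flats {V : Set E} (H : ι → Set E) {x : E} (hx : x ∈ V) :
    flatOf V H x ∈ flats V H :=
  ⟨⟨_, rfl⟩, ⟨x, mem_flatOf hx⟩⟩

lemma flatOf_subset {V : Set E} {H : ι → Set E} {W : Set E} (hW : W ∈ flats V H) {x : E}
    (hx : x ∈ W) : flatOf V H x ⊆ W := by
  obtain ⟨⟨S, rfl⟩, -⟩ := hW
  refine Set.subset_inter Set.inter_subset_left (Set.subset_iInter₂ fun i hi => ?_)
  have hxi : x ∈ H i := Set.mem_iInter₂.1 hx.2 i hi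
  exact fun y hy => Set.mem_iInter₂.1 hy.2 i hxi

lemma mem_mres_flatOf {V : Set E} {H : ι → Set E} {x : E} (hx : x ∈ V) :
    x ∈ mresA H (flatOf V H x) := by
  refine ⟨mem_flatOf hx, fun hmem => ?_⟩
  rw [Set.mem_iUnion₂] at hmem
  obtain ⟨i, hni, hxi⟩ := hmem
  exact hni fun y hy => Set.mem_iInter₂.1 hy.2 i hxi

lemma eq_flatOf_of_mem_mres {V : Set E} {H : ι → Set E} {W : Set E} (hW : W ∈ flats V H)
    {x : E} (hx : x ∈ mresA H W) : W = flatOf V H x := by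
  obtain ⟨hxW, hxU⟩ := hx
  refine subset_antisymm (Set.subset_inter (flats_subset hW) (Set.subset_iInter₂ fun i hi => ?_)) ?_
  · by_contra hns
    rw [Set.not_subset] at hns
    obtain ⟨y, hyW, hyi⟩ := hns
    have hWn : ¬ W ⊆ H i := fun h => hyi (h hyW)
    exact hxU (Set.mem_iUnion₂.2 ⟨i, hWn, hi⟩)
  · obtain ⟨⟨S, rfl⟩, -⟩ := hW
    refine Set.subset_inter Set.inter_subset_left (Set.subset_iInter₂ fun i hiS => ?_)
    have hxi : x ∈ H i := Set.mem_iInter₂.1 hxW.2 i hiS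
    exact fun y hy => Set.mem_iInter₂.1 hy.2 i hxi

lemma mem_mres_iff {V : Set E} {H : ι → Set E} {W : Set E} (hW : W ∈ flats V H) {x : E} :
    x ∈ mresA H W ↔ x ∈ V ∧ flatOf V H x = W :=
  ⟨fun h => ⟨flats_subset hW h.1, (eq_flatOf_of_mem_mres hW h).symm⟩,
   fun ⟨hxV, hfe⟩ => hfe ▸ mem_mres_flatOf hxV⟩

lemma affClosed_univ (F : Type*) [Field F] {E : Type*} [AddCommGroup E] [Module F E] :
    AffClosed F (Set.univ : Set E) := fun _ _ _ _ _ _ _ => Set.mem_univ _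

lemma affClosed_inter {F : Type*} [Field F] {E : Type*} [AddCommGroup E] [Module F E]
    {W₁ W₂ : Set E} (h₁ : AffClosed F W₁) (h₂ : AffClosed F W₂) : AffClosed F (W₁ ∩ W₂) :=
  fun c _ _ _ hp₁ hp₂ hp₃ => ⟨h₁ c hp₁.1 hp₂.1 hp₃.1, h₂ c hp₁.2 hp₂.2 hp₃.2⟩

lemma affClosed_flat {F : Type*} [Field F] {E : Type*} [AddCommGroup E] [Module F E]
    {ι : Type*} {V : Set E} {H : ι → Set E} (hV : AffClosed F V) (hH : ∀ i, AffClosed F (H i))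
    {W : Set E} (hW : W ∈ flats V H) : AffClosed F W := by
  obtain ⟨⟨S, rfl⟩, -⟩ := hW
  intro c p₁ p₂ p₃ h1 h2 h3
  exact ⟨hV c h1.1 h2.1 h3.1, Set.mem_iInter₂.2 fun i hi =>
    hH i c (Set.mem_iInter₂.1 h1.2 i hi) (Set.mem_iInter₂.1 h2.2 i hi)
      (Set.mem_iInter₂.1 h3.2 i hi)⟩

lemma card_affClosed {F : Type*} [Field F] [Fintype F] {E : Type*} [AddCommGroup E]
    [Module F E] [Finite E] {W : Set E} (hW : AffClosed F W) (hne : W.Nonempty) :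
    Nat.card W = Fintype.card F ^ adim F W := by
  classical
  let s : AffineSubspace F E :=
    { carrier := W
      smul_vsub_vadd_mem' := fun c p₁ p₂ p₃ h1 h2 h3 => by
        simpa [vsub_eq_sub, vadd_eq_add] using hW c h1 h2 h3 }
  obtain ⟨p, hp⟩ := hne
  have hps : p ∈ s := hp
  have hspan : affineSpan F W = s := AffineSubspace.affineSpan_coe s
  have hadim : adim F W = Module.finrank F s.direction := by rw [adim, hspan]
  rw [hadim]
  have e : ↥(s.direction) ≃ ↥W :=
    { toFun := fun v => ⟨v.1 + p, by
        show v.1 + p ∈ s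
        simpa [vadd_eq_add] using AffineSubspace.vadd_mem_of_mem_direction v.2 hps⟩
      invFun := fun x => ⟨x.1 - p, by
        have hxs : x.1 ∈ s := x.2
        simpa [vsub_eq_sub] using AffineSubspace.vsub_mem_direction hxs hps⟩
      left_inv := fun v => by ext; simp
      right_inv := fun x => by ext; simp }
  rw [← Nat.card_congr e]
  haveI : Fintype ↥(s.direction) := Fintype.ofFinite _
  rw [Nat.card_eq_fintype_card]
  exact Module.card_eq_pow_finrank

open IncidenceAlgebra in
lemma my_inversion {α : Type*} [PartialOrder α] [Fintype α] [DecidableEq α]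
    [LocallyFiniteOrder α] [@DecidableRel α α (· ≤ ·)] (v : α) (hv : ∀ x, x ≤ v) (a : α → ℤ) :
    ∑ x : α, mu ℤ x v * (∑ y ∈ Finset.univ.filter (· ≤ x), a y) = a v := by
  calc ∑ x : α, mu ℤ x v * (∑ y ∈ Finset.univ.filter (· ≤ x), a y)
      = ∑ x : α, ∑ y : α, if y ≤ x then mu ℤ x v * a y else 0 := by
        refine Finset.sum_congr rfl fun x _ => ?_
        rw [Finset.sum_filter, Finset.mul_sum]
        exact Finset.sum_congr rfl fun y _ => by split <;> simp
    _ = ∑ y : α, ∑ x : α, if y ≤ x then mu ℤ x v * a y else 0 := Finset.sum_comm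
    _ = ∑ y : α, (∑ x ∈ Finset.Icc y v, mu ℤ x v) * a y := by
        refine Finset.sum_congr rfl fun y _ => ?_
        rw [Finset.sum_mul, ← Finset.sum_filter]
        apply Finset.sum_congr _ fun _ _ => rfl
        ext x; simp [Finset.mem_Icc, hv x]
    _ = a v := by
        simp_rw [sum_Icc_mu_left]
        simp

end Aux
section Aux2

variable {E ι : Type*}

lemma card_flat_sub [Finite E] {V : Set E} {H : ι → Set E} (hV : V.Nonempty)
    [Fintype ↥(flats V H)] [DecidableRel (α := ↥(flats V H)) (· ≤ ·)]
    (W : ↥(flats V H)) :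
    Nat.card (W : Set E) =
      ∑ W' ∈ Finset.univ.filter (· ≤ W), Nat.card (mresA H (W' : Set E)) := by
  classical
  haveI : Fintype E := Fintype.ofFinite E
  set f : E → ↥(flats V H) := fun x =>
    if hx : x ∈ V then ⟨flatOf V H x, flatOf_mem_flats H hx⟩
    else ⟨V, self_mem_flats H hV⟩ with hf
  have hcard : Nat.card (W : Set E) = (W : Set E).toFinset.card := by
    rw [Nat.card_coe_set_eq, Set.ncard_eq_toFinset_card']
  rw [hcard]
  rw [Finset.card_eq_sum_card_fiberwise (f := f) (t := Finset.univ.filter (· ≤ W)) ?maps]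
  case maps =>
    intro x hx
    have hxW : x ∈ (W : Set E) := Set.mem_toFinset.1 hx
    have hxV : x ∈ V := flats_subset W.2 hxW
    have hfx : f x = ⟨flatOf V H x, flatOf_mem_flats H hxV⟩ := dif_pos hxV
    rw [Finset.mem_coe, Finset.mem_filter, hfx]
    exact ⟨Finset.mem_univ _, flatOf_subset W.2 hxW⟩
  refine Finset.sum_congr rfl fun W' hW' => ?_
  have hsub : (W' : Set E) ⊆ (W : Set E) := (Finset.mem_filter.1 hW').2
  have hset : ((W : Set E).toFinset.filter (fun x => f x = W')) =
      (mresA H (W' : Set E)).toFinset := by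
    ext x
    simp only [Finset.mem_filter, Set.mem_toFinset]
    constructor
    · rintro ⟨hxW, hfx⟩
      have hxV : x ∈ V := flats_subset W.2 hxW
      rw [hf] at hfx
      simp only [dif_pos hxV] at hfx
      have hval : flatOf V H x = (W' : Set E) := congrArg Subtype.val hfx
      exact (mem_mres_iff W'.2).2 ⟨hxV, hval⟩
    · intro hx
      obtain ⟨hxV, hfo⟩ := (mem_mres_iff W'.2).1 hx
      refine ⟨hsub hx.1, ?_⟩
      rw [hf]
      simp only [dif_pos hxV]
      exact Subtype.ext hfo
  rw [hset, ← Set.ncard_eq_toFinset_card', ← Nat.card_coe_set_eq]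

lemma chi_eval {F : Type*} [Field F] [Fintype F] [AddCommGroup E] [Module F E]
    [Finite E] [Finite ι] {V : Set E} {H : ι → Set E}
    (hV : V.Nonempty) (hVa : AffClosed F V) (hHa : ∀ i, AffClosed F (H i)) :
    (chi F V H).eval (Fintype.card F : ℤ) = Nat.card (mresA H V) := by
  classical
  letI : Fintype ↥(flats V H) := (flats_finite V H).fintype
  letI : LocallyFiniteOrder ↥(flats V H) := Fintype.toLocallyFiniteOrder
  rw [chi, dif_pos hV, Polynomial.eval_finset_sum]
  simp only [Polynomial.eval_mul, Polynomial.eval_C, Polynomial.eval_pow, Polynomial.eval_X]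
  have key : ∀ Wx : ↥(flats V H), ((Fintype.card F : ℤ)) ^ adim F (Wx : Set E) =
      ∑ y ∈ Finset.univ.filter (· ≤ Wx), (Nat.card (mresA H (y : Set E)) : ℤ) := by
    intro Wx
    have hne : (Wx : Set E).Nonempty := Wx.2.2
    have h1 : Nat.card (Wx : Set E) = Fintype.card F ^ adim F (Wx : Set E) :=
      card_affClosed (affClosed_flat hVa hHa Wx.2) hne
    have h2 := card_flat_sub (H := H) hV Wx
    rw [h1] at h2
    exact_mod_cast congrArg (Nat.cast : ℕ → ℤ) h2
  calc (∑ Wx : ↥(flats V H),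
        IncidenceAlgebra.mu ℤ Wx (⟨V, self_mem_flats H hV⟩ : ↥(flats V H)) *
          (Fintype.card F : ℤ) ^ adim F (Wx : Set E))
      = ∑ Wx : ↥(flats V H),
          IncidenceAlgebra.mu ℤ Wx (⟨V, self_mem_flats H hV⟩ : ↥(flats V H)) *
            (∑ y ∈ Finset.univ.filter (· ≤ Wx), (Nat.card (mresA H (y : Set E)) : ℤ)) := by
        exact Finset.sum_congr rfl fun Wx _ => by rw [key]
    _ = (Nat.card (mresA H V) : ℤ) := by
        exact my_inversion (⟨V, self_mem_flats H hV⟩ : ↥(flats V H))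
          (fun Wx => flats_subset Wx.2) _

end Aux2
section Aux3

variable {F : Type*} [Field F] {m n : ℕ}

lemma affClosed_Hcirc (A : Matrix (Fin m) (Fin n) F) (I : Finset (Fin m)) :
    AffClosed F (Hcirc A I) := by
  intro c p₁ p₂ p₃ h1 h2 h3 cv hcv
  have e1 := h1 cv hcv
  have e2 := h2 cv hcv
  have e3 := h3 cv hcv
  simp [dotProduct_add, dotProduct_sub, dotProduct_smul, e1, e2, e3]

lemma affClosed_Haff (A : Matrix (Fin m) (Fin n) F) (g : Fin m → F) (i : Fin m) :
    AffClosed F (Haff A g i) := by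
  intro c p₁ p₂ p₃ h1 h2 h3
  have e1 : A i ⬝ᵥ p₁ = g i := h1
  have e2 : A i ⬝ᵥ p₂ = g i := h2
  have e3 : A i ⬝ᵥ p₃ = g i := h3
  show A i ⬝ᵥ (c • (p₁ - p₂) + p₃) = g i
  simp [dotProduct_add, dotProduct_sub, dotProduct_smul, e1, e2, e3]

lemma haff_proper (A : Matrix (Fin m) (Fin n) F) (g : Fin m → F) (i : Fin m)
    (hi : A i ≠ 0) : ¬ (Set.univ : Set (Fin n → F)) ⊆ Haff A g i := by
  intro hsub
  have h0 : (0 : F) = g i := by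
    have := hsub (Set.mem_univ (0 : Fin n → F))
    simpa [Haff] using this
  obtain ⟨j, hj⟩ : ∃ j, A i j ≠ 0 := by
    by_contra hno
    push_neg at hno
    exact hi (funext hno)
  have h1 : (1 : F) = g i := by
    have := hsub (Set.mem_univ (Pi.single j (A i j)⁻¹))
    have h := this
    simp only [Haff, Set.mem_setOf_eq, dotProduct_single] at h
    rw [mul_inv_cancel₀ hj] at h
    exact h
  rw [← h0] at h1
  exact one_ne_zero h1

lemma mres_univ_haff (A : Matrix (Fin m) (Fin n) F) (g : Fin m → F)
    (hrows : ∀ i, A i ≠ 0) :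
    mresA (Haff A g) (Set.univ : Set (Fin n → F)) = {x | ∀ i, A i ⬝ᵥ x ≠ g i} := by
  have hp : ∀ i, ¬ (Set.univ : Set (Fin n → F)) ⊆ Haff A g i :=
    fun i => haff_proper A g i (hrows i)
  ext x
  simp only [mresA, Set.mem_diff, Set.mem_univ, true_and, Set.mem_iUnion, Set.mem_setOf_eq]
  constructor
  · intro h i hxi
    exact h ⟨i, hp i, hxi⟩
  · rintro h ⟨i, -, hxi⟩
    exact h i hxi

lemma mres_eq_Mres (A : Matrix (Fin m) (Fin n) F) (X : Set (Fin m → F)) :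
    mresA (fun I : {I : Finset (Fin m) // IsCircuit A I} => Hcirc A I.1) X = Mres A X := by
  ext x
  simp only [mresA, Mres, Set.mem_diff, Set.mem_iUnion, Set.mem_setOf_eq, and_congr_right_iff]
  intro hxX
  constructor
  · intro h
    rintro ⟨I, ⟨hI, hns⟩, hxI⟩
    exact h ⟨⟨I, hI⟩, hns, hxI⟩
  · intro h
    rintro ⟨⟨I, hI⟩, hns, hxI⟩
    exact h ⟨I, ⟨hI, hns⟩, hxI⟩

lemma mres_restrict (A : Matrix (Fin m) (Fin n) F) (X : Set (Fin m → F)) :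
    mresA (fun I : {I : Finset (Fin m) // IsCircuit A I ∧ ¬ X ⊆ Hcirc A I} =>
      Hcirc A I.1 ∩ X) X =
    mresA (fun I : {I : Finset (Fin m) // IsCircuit A I} => Hcirc A I.1) X := by
  ext x
  simp only [mresA, Set.mem_diff, Set.mem_iUnion, Set.mem_setOf_eq, and_congr_right_iff]
  intro hxX
  constructor
  · intro h
    rintro ⟨⟨I, hI⟩, hns, hxI⟩
    refine h ⟨⟨I, hI, hns⟩, ?_, hxI, hxX⟩
    intro hsub
    exact hns fun y hy => (hsub hy).1
  · intro h
    rintro ⟨⟨I, hI, hns⟩, -, hxI, -⟩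
    exact h ⟨⟨I, hI⟩, hns, hxI⟩

lemma count_sum [Fintype F] (A : Matrix (Fin m) (Fin n) F) :
    ∑ g : Fin m → F, (Nat.card {x : Fin n → F | ∀ i, A i ⬝ᵥ x ≠ g i} : ℤ) =
      (Fintype.card F : ℤ) ^ n * ((Fintype.card F : ℤ) - 1) ^ m := by
  classical
  have hone : 1 ≤ Fintype.card F := Fintype.card_pos
  have hsub : ∀ c : F, Fintype.card {t : F // t ≠ c} = Fintype.card F - 1 := by
    intro c
    rw [Fintype.card_subtype_compl, Fintype.card_subtype_eq]
  have hinner : ∀ x : Fin n → F,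
      (Finset.univ.filter (fun g : Fin m → F => ∀ i, g i ≠ A i ⬝ᵥ x)).card =
        (Fintype.card F - 1) ^ m := by
    intro x
    rw [← Fintype.card_subtype]
    rw [Fintype.card_congr (Equiv.subtypePiEquivPi (p := fun i (t : F) => t ≠ A i ⬝ᵥ x))]
    rw [Fintype.card_pi]
    simp [hsub]
  have hnat : ∑ g : Fin m → F, Nat.card {x : Fin n → F | ∀ i, A i ⬝ᵥ x ≠ g i} =
      Fintype.card F ^ n * (Fintype.card F - 1) ^ m := by
    have h1 : ∀ g : Fin m → F, Nat.card {x : Fin n → F | ∀ i, A i ⬝ᵥ x ≠ g i} =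
        (Finset.univ.filter (fun x : Fin n → F => ∀ i, A i ⬝ᵥ x ≠ g i)).card := by
      intro g
      rw [Nat.card_coe_set_eq, Set.ncard_eq_toFinset_card', Set.toFinset_setOf]
    calc ∑ g : Fin m → F, Nat.card {x : Fin n → F | ∀ i, A i ⬝ᵥ x ≠ g i}
        = ∑ g : Fin m → F, ∑ x : Fin n → F, if ∀ i, A i ⬝ᵥ x ≠ g i then 1 else 0 := by
          refine Finset.sum_congr rfl fun g _ => ?_
          rw [h1, Finset.card_filter]
      _ = ∑ x : Fin n → F, ∑ g : Fin m → F, if ∀ i, A i ⬝ᵥ x ≠ g i then 1 else 0 :=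
          Finset.sum_comm
      _ = ∑ x : Fin n → F, (Fintype.card F - 1) ^ m := by
          refine Finset.sum_congr rfl fun x _ => ?_
          rw [← hinner x, Finset.card_filter]
          refine Finset.sum_congr rfl fun g _ => ?_
          congr 1
          simp only [eq_iff_iff]
          constructor
          · intro h i hh
            exact h i hh.symm
          · intro h i hh
            exact h i hh.symm
      _ = Fintype.card F ^ n * (Fintype.card F - 1) ^ m := by
          rw [Finset.sum_const, Finset.card_univ, Fintype.card_pi]
          simp [mul_comm]
  calc ∑ g : Fin m → F, (Nat.card {x : Fin n → F | ∀ i, A i ⬝ᵥ x ≠ g i} : ℤ)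
      = ((∑ g : Fin m → F, Nat.card {x : Fin n → F | ∀ i, A i ⬝ᵥ x ≠ g i} : ℕ) : ℤ) := by
        push_cast
        rfl
    _ = (Fintype.card F : ℤ) ^ n * ((Fintype.card F : ℤ) - 1) ^ m := by
        rw [hnat]
        push_cast [Nat.cast_sub hone]
        ring

end Aux3
/-- **Theorem 4.2, finite field case.** Let `F` be a finite field with `q`
elements. For `X ∈ L(A^ρ)` let `chiX X` be the common characteristic polynomial
`χ(A_g, t)` of the arrangements `A_g` with `g ∈ M(A^ρ/X)`, and let `χ(A^ρ/X, t)` be the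
characteristic polynomial of the restricted arrangement `{H_I ∩ X : I ∈ C(M), X ⊄ H_I}` of
hyperplanes of the ambient space `X`. Then
`∑_{X ∈ L(A^ρ)} χ(X, q) · χ(A^ρ/X, q) = q^n (q - 1)^m`. -/
theorem decomposition_formula {F : Type*} [Field F] [Fintype F] {m n : ℕ}
    (hm : 0 < m) (hn : 0 < n) (A : Matrix (Fin m) (Fin n) F) (hrows : ∀ i, A i ≠ 0)
    (q : ℕ) (hq : q = Fintype.card F)
    (chiX : Set (Fin m → F) → Polynomial ℤ)
    (hchiX : ∀ X ∈ flats Set.univ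
        (fun I : {I : Finset (Fin m) // IsCircuit A I} => Hcirc A I.1),
      ∀ g ∈ Mres A X, chiX X = chi F Set.univ (Haff A g)) :
    (∑ᶠ X ∈ flats Set.univ
        (fun I : {I : Finset (Fin m) // IsCircuit A I} => Hcirc A I.1),
      (chiX X).eval (q : ℤ) *
        (chi F X
          (fun I : {I : Finset (Fin m) // IsCircuit A I ∧ ¬ X ⊆ Hcirc A I} =>
            Hcirc A I.1 ∩ X)).eval (q : ℤ)) =
      (q : ℤ) ^ n * ((q : ℤ) - 1) ^ m := by
  classical
  subst hq
  set H₀ : {I : Finset (Fin m) // IsCircuit A I} → Set (Fin m → F) :=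
    fun I => Hcirc A I.1 with hH₀
  set P := flats Set.univ H₀ with hP
  have hPfin : P.Finite := flats_finite _ _
  set N : (Fin m → F) → ℤ :=
    fun g => (Nat.card {x : Fin n → F | ∀ i, A i ⬝ᵥ x ≠ g i} : ℤ) with hN
  -- Step 1: for every `g`, the F^n arrangement complement count.
  have step1 : ∀ g : Fin m → F,
      (chi F Set.univ (Haff A g)).eval ((Fintype.card F : ℕ) : ℤ) = N g := by
    intro g
    rw [chi_eval (V := (Set.univ : Set (Fin n → F))) (H := Haff A g)
      Set.univ_nonempty (affClosed_univ F) (fun i => affClosed_Haff A g i)]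
    rw [mres_univ_haff A g hrows]
  -- Step 2: for every flat `X`, the restricted chi counts `mresA H₀ X`.
  have step2 : ∀ X ∈ P,
      (chi F X
        (fun I : {I : Finset (Fin m) // IsCircuit A I ∧ ¬ X ⊆ Hcirc A I} =>
          Hcirc A I.1 ∩ X)).eval ((Fintype.card F : ℕ) : ℤ) =
        (Nat.card (mresA H₀ X) : ℤ) := by
    intro X hX
    have hXa : AffClosed F X :=
      affClosed_flat (V := (Set.univ : Set (Fin m → F))) (H := H₀)
        (affClosed_univ F) (fun i => affClosed_Hcirc A i.1) hX
    rw [chi_eval (V := X)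
      (H := fun I : {I : Finset (Fin m) // IsCircuit A I ∧ ¬ X ⊆ Hcirc A I} =>
        Hcirc A I.1 ∩ X)
      hX.2 hXa (fun i => affClosed_inter (affClosed_Hcirc A i.1) hXa)]
    rw [mres_restrict A X]
  -- Step 3: each flat's contribution is a sum over its `mresA` piece.
  have step3 : ∀ X ∈ hPfin.toFinset,
      (chiX X).eval ((Fintype.card F : ℕ) : ℤ) *
        (chi F X
          (fun I : {I : Finset (Fin m) // IsCircuit A I ∧ ¬ X ⊆ Hcirc A I} =>
            Hcirc A I.1 ∩ X)).eval ((Fintype.card F : ℕ) : ℤ) =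
      ∑ g ∈ (mresA H₀ X).toFinset, N g := by
    intro X hXf
    have hX : X ∈ P := hPfin.mem_toFinset.1 hXf
    rw [step2 X hX]
    have hgood : ∀ g ∈ (mresA H₀ X).toFinset,
        N g = (chiX X).eval ((Fintype.card F : ℕ) : ℤ) := by
      intro g hg
      have hg' : g ∈ Mres A X := by
        rw [← mres_eq_Mres A X]
        exact Set.mem_toFinset.1 hg
      rw [hchiX X hX g hg', step1 g]
    rw [Finset.sum_congr rfl hgood, Finset.sum_const]
    rw [← Set.ncard_eq_toFinset_card', ← Nat.card_coe_set_eq, nsmul_eq_mul, mul_comm]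
  -- Step 4: the pieces partition `F^m`.
  have step4 : ∑ X ∈ hPfin.toFinset, ∑ g ∈ (mresA H₀ X).toFinset, N g =
      ∑ g : Fin m → F, N g := by
    have hmaps : ∀ g ∈ (Finset.univ : Finset (Fin m → F)),
        flatOf Set.univ H₀ g ∈ hPfin.toFinset :=
      fun g _ => hPfin.mem_toFinset.2 (flatOf_mem_flats H₀ (Set.mem_univ g))
    rw [← Finset.sum_fiberwise_of_maps_to hmaps N]
    refine Finset.sum_congr rfl fun X hXf => ?_
    have hX : X ∈ P := hPfin.mem_toFinset.1 hXf
    refine Finset.sum_congr ?_ fun _ _ => rfl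
    ext g
    simp only [Finset.mem_filter, Finset.mem_univ, true_and, Set.mem_toFinset]
    rw [mem_mres_iff hX]
    simp
  -- Assemble.
  have hfs : (∑ᶠ X ∈ P,
      (chiX X).eval ((Fintype.card F : ℕ) : ℤ) *
        (chi F X
          (fun I : {I : Finset (Fin m) // IsCircuit A I ∧ ¬ X ⊆ Hcirc A I} =>
            Hcirc A I.1 ∩ X)).eval ((Fintype.card F : ℕ) : ℤ)) =
      ∑ X ∈ hPfin.toFinset,
        (chiX X).eval ((Fintype.card F : ℕ) : ℤ) *
          (chi F X
            (fun I : {I : Finset (Fin m) // IsCircuit A I ∧ ¬ X ⊆ Hcirc A I} =>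
              Hcirc A I.1 ∩ X)).eval ((Fintype.card F : ℕ) : ℤ) := by
    exact finsum_mem_eq_finite_toFinset_sum _ hPfin
  rw [hfs, Finset.sum_congr rfl step3, step4, hN]
  exact count_sum A
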